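/- arXiv:math/0201312 — 3 statements merged into one kernel-verified Lean document; each statement's English description precedes it below -/
import Mathlib

section
/- A map f : X → Y between metric spaces is a uniform embedding if and only if there exist a nondecreasing function ρ₋ : ℝ≥0 → ℝ≥0 with ρ₋(t) → ∞ as t → ∞, and constants K, L, such that ρ₋(d(x,y)) ≤ d(f(x),f(y)) ≤ K·d(x,y) + L for all x, y ∈ X. (Here X is assumed to be a metric space in which distances take values in a set closed under the relevant operations, e.g. a geodesic space or a graph with the path metric.) -/
/-- `f` is a uniform embedding: a coarsely `(K,L)`-Lipschitz map such that for every
`E > 0` there is `D > 0` with: any `A ⊆ Y` of diameter `< E` has preimage of diameter `< D`. -/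
def IsUniformCoarseEmbedding {X Y : Type*} [PseudoMetricSpace X] [PseudoMetricSpace Y]
    (f : X → Y) : Prop :=
  (∃ K L : ℝ, ∀ x y : X, dist (f x) (f y) ≤ K * dist x y + L) ∧
  ∀ E : ℝ, 0 < E → ∃ D : ℝ, 0 < D ∧ ∀ A : Set Y,
    EMetric.diam A < ENNReal.ofReal E → EMetric.diam (f ⁻¹' A) < ENNReal.ofReal D

/-- `X` is a geodesic metric space: any two points are joined by a path whose length equals
their distance (expressed via an isometric parametrization of `[0, d(x,y)]`). -/
def IsGeodesicMetricSpace (X : Type*) [MetricSpace X] : Prop :=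
  ∀ x y : X, ∃ γ : ℝ → X, γ 0 = x ∧ γ (dist x y) = y ∧
    ∀ s ∈ Set.Icc (0 : ℝ) (dist x y), ∀ t ∈ Set.Icc (0 : ℝ) (dist x y),
      dist (γ s) (γ t) = |s - t|

/-!
The lower control is the compression function `ρ₋(t) = inf {d(f x, f y) : d(x, y) ≥ t}`.
The preimage condition on diameters, tested on two-point sets `{f x, f y}`, says exactly that
`d(f x, f y)` is large once `d(x, y)` is large, i.e. that `ρ₋(t) → ∞`; conversely any lower
control tending to infinity bounds the diameter of preimages of small sets.
-/

open Filter Metric Topology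
open scoped NNReal ENNReal

/-- Truncating by `t` makes a function into `ℝ≥0∞` finite without losing monotonicity or the
limit at infinity. -/
theorem exists_monotone_nnreal_le_of_tendsto_atTop {g : ℝ≥0 → ℝ≥0∞} (hg : Monotone g)
    (hg_top : Tendsto g atTop (𝓝 ∞)) :
    ∃ ρ : ℝ≥0 → ℝ≥0, Monotone ρ ∧ Tendsto ρ atTop atTop ∧ ∀ t, (ρ t : ℝ≥0∞) ≤ g t := by
  have hfin : ∀ t : ℝ≥0, min (t : ℝ≥0∞) (g t) ≠ ⊤ :=
    fun t => ne_top_of_le_ne_top ENNReal.coe_ne_top (min_le_left _ _)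
  refine ⟨fun t => (min (t : ℝ≥0∞) (g t)).toNNReal, fun s t hst => ?_, ?_, fun t => ?_⟩
  · exact ENNReal.toNNReal_mono (hfin t) (min_le_min (by exact_mod_cast hst) (hg hst))
  · refine tendsto_atTop.2 fun b => ?_
    filter_upwards [eventually_ge_atTop b, ENNReal.tendsto_nhds_top_iff_nnreal.1 hg_top b]
      with t hbt hbg
    exact ENNReal.le_toNNReal_of_coe_le (le_min (by exact_mod_cast hbt) hbg.le) (hfin t)
  · rw [ENNReal.coe_toNNReal (hfin t)]
    exact min_le_right _ _

section Compression

variable {X Y : Type*} [PseudoMetricSpace X] [PseudoMetricSpace Y]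

theorem forall_ediam_preimage_lt_iff (f : X → Y) :
    (∀ E : ℝ, 0 < E → ∃ D : ℝ, 0 < D ∧ ∀ A : Set Y,
      ediam A < ENNReal.ofReal E → ediam (f ⁻¹' A) < ENNReal.ofReal D) ↔
    ∀ E : ℝ, ∃ D : ℝ, ∀ x y : X, D ≤ dist x y → E ≤ dist (f x) (f y) := by
  constructor
  · intro h E
    rcases le_or_gt E 0 with hE | hE
    · exact ⟨0, fun x y _ => hE.trans dist_nonneg⟩
    obtain ⟨D, -, hD⟩ := h E hE
    refine ⟨D, fun x y hxy => le_of_not_gt fun hlt => hxy.not_gt ?_⟩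
    have hpair : ediam ({f x, f y} : Set Y) < ENNReal.ofReal E := by
      rwa [ediam_pair, edist_lt_ofReal]
    exact edist_lt_ofReal.1 <|
      (edist_le_ediam_of_mem (by simp) (by simp)).trans_lt (hD _ hpair)
  · intro h E hE
    obtain ⟨D, hD⟩ := h E
    refine ⟨max D 0 + 1, by positivity, fun A hA => ?_⟩
    have hpre : ediam (f ⁻¹' A) ≤ ENNReal.ofReal (max D 0) := by
      refine ediam_le fun x hx y hy => (edist_lt_ofReal.2 ?_).le
      have hfxy : dist (f x) (f y) < E :=
        edist_lt_ofReal.1 ((edist_le_ediam_of_mem (s := A) hx hy).trans_lt hA)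
      exact (lt_of_not_ge fun hxy => hfxy.not_ge (hD x y hxy)).trans_le (le_max_left _ _)
    exact hpre.trans_lt ((ENNReal.ofReal_lt_ofReal_iff (by positivity)).2 (lt_add_one _))

/-- The compression function of `f`, with the convention `inf ∅ = ∞`. -/
noncomputable def compression (f : X → Y) (t : ℝ≥0) : ℝ≥0∞ :=
  ⨅ (x : X) (y : X) (_ : t ≤ nndist x y), edist (f x) (f y)

theorem monotone_compression (f : X → Y) : Monotone (compression f) :=
  fun _ _ hst => iInf₂_mono fun _ _ => iInf_mono' fun h => ⟨hst.trans h, le_rfl⟩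

theorem compression_nndist_le (f : X → Y) (x y : X) :
    compression f (nndist x y) ≤ edist (f x) (f y) :=
  iInf₂_le_of_le x y (iInf_le _ le_rfl)

theorem tendsto_compression_atTop {f : X → Y}
    (hf : ∀ E : ℝ, ∃ D : ℝ, ∀ x y : X, D ≤ dist x y → E ≤ dist (f x) (f y)) :
    Tendsto (compression f) atTop (𝓝 ∞) := by
  refine ENNReal.tendsto_nhds_top_iff_nnreal.2 fun b => ?_
  obtain ⟨D, hD⟩ := hf (b + 1)
  filter_upwards [eventually_ge_atTop D.toNNReal] with t ht
  refine (ENNReal.coe_lt_coe.2 (lt_add_one b)).trans_le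
    (le_iInf₂ fun x y => le_iInf fun htxy => ?_)
  have hxy : D ≤ dist x y := by
    rw [dist_nndist]
    exact Real.toNNReal_le_iff_le_coe.1 (ht.trans htxy)
  rw [edist_dist, ← ENNReal.ofReal_coe_nnreal]
  exact ENNReal.ofReal_le_ofReal (by exact_mod_cast hD x y hxy)

theorem forall_le_dist_iff_exists_lower_control (f : X → Y) :
    (∀ E : ℝ, ∃ D : ℝ, ∀ x y : X, D ≤ dist x y → E ≤ dist (f x) (f y)) ↔
    ∃ ρ : ℝ≥0 → ℝ≥0, Monotone ρ ∧ Tendsto ρ atTop atTop ∧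
      ∀ x y : X, (ρ (nndist x y) : ℝ) ≤ dist (f x) (f y) := by
  constructor
  · intro hf
    obtain ⟨ρ, hρ, hρ_top, hρg⟩ :=
      exists_monotone_nnreal_le_of_tendsto_atTop (monotone_compression f)
        (tendsto_compression_atTop hf)
    refine ⟨ρ, hρ, hρ_top, fun x y => ?_⟩
    have h := (hρg _).trans (compression_nndist_le f x y)
    rw [edist_nndist, ENNReal.coe_le_coe] at h
    exact_mod_cast h
  · rintro ⟨ρ, -, hρ_top, hρf⟩ E
    obtain ⟨T, hT⟩ := eventually_atTop.1 (tendsto_atTop.1 hρ_top E.toNNReal)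
    refine ⟨T, fun x y hxy => ?_⟩
    have hTxy : T ≤ nndist x y := by rw [← NNReal.coe_le_coe, coe_nndist]; exact hxy
    exact (Real.toNNReal_le_iff_le_coe.1 (hT _ hTxy)).trans (hρf x y)

end Compression

theorem isUniformCoarseEmbedding_iff_exists_lower_control_general (X Y : Type)
    [MetricSpace X] [MetricSpace Y] (f : X → Y) :
    IsUniformCoarseEmbedding f ↔
      ∃ ρ : NNReal → NNReal, Monotone ρ ∧
        Filter.Tendsto ρ Filter.atTop Filter.atTop ∧
        ∃ K L : ℝ, ∀ x y : X,
          (ρ (nndist x y) : ℝ) ≤ dist (f x) (f y) ∧ dist (f x) (f y) ≤ K * dist x y + L := by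
  refine (and_congr_right' ((forall_ediam_preimage_lt_iff f).trans
    (forall_le_dist_iff_exists_lower_control f))).trans ?_
  constructor
  · rintro ⟨⟨K, L, hKL⟩, ρ, hρ, hρ_top, hρf⟩
    exact ⟨ρ, hρ, hρ_top, K, L, fun x y => ⟨hρf x y, hKL x y⟩⟩
  · rintro ⟨ρ, hρ, hρ_top, K, L, h⟩
    exact ⟨⟨K, L, fun x y => (h x y).2⟩, ρ, hρ, hρ_top, fun x y => (h x y).1⟩

/-- A map `f : X → Y` from a geodesic metric space is a uniform embedding iff there exist a
nondecreasing `ρ₋ : ℝ≥0 → ℝ≥0` with `ρ₋(t) → ∞`, and constants `K, L`, such that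
`ρ₋(d(x,y)) ≤ d(f x, f y) ≤ K·d(x,y) + L` for all `x, y`. -/
theorem isUniformCoarseEmbedding_iff_exists_lower_control (X Y : Type)
    [MetricSpace X] [MetricSpace Y] (hX : IsGeodesicMetricSpace X) (f : X → Y) :
    IsUniformCoarseEmbedding f ↔
      ∃ ρ : NNReal → NNReal, Monotone ρ ∧
        Filter.Tendsto ρ Filter.atTop Filter.atTop ∧
        ∃ K L : ℝ, ∀ x y : X,
          (ρ (nndist x y) : ℝ) ≤ dist (f x) (f y) ∧ dist (f x) (f y) ≤ K * dist x y + L :=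
  isUniformCoarseEmbedding_iff_exists_lower_control_general X Y f
end

section
/- Let G be a finitely generated group with Cayley graph Γ, and let J ≤ G be a finitely generated subgroup. If X ⊆ G is a nontrivial J-almost invariant subset associated to a splitting G = A ∗_J B, then for every g ∈ G, gX does not cross X. -/
/-- Alternating words in `A \ J` and `B \ J`. -/
inductive AltWord {G : Type*} [Group G] (A B J : Subgroup G) : Bool → List G → Prop
  | nil (b : Bool) : AltWord A B J b []
  | consA {x : G} {l : List G} : x ∈ A → x ∉ J → AltWord A B J false l →
      AltWord A B J true (x :: l)
  | consB {x : G} {l : List G} : x ∈ B → x ∉ J → AltWord A B J true l →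
      AltWord A B J false (x :: l)

/-- The `J`-almost invariant subset of `G = A ∗_J B` associated to the splitting: elements
whose normal form begins with an element of `A \ J`. -/
def amalgamPositiveSet {G : Type*} [Group G] (A B J : Subgroup G) : Set G :=
  { g | ∃ (j : G) (l : List G), j ∈ J ∧ l ≠ [] ∧ AltWord A B J true l ∧ g = j * l.prod }

/-- The projection of a subset of `G` to the coset space `J\G`. -/
def cosetProj {G : Type*} [Group G] (J : Subgroup G) (X : Set G) : Set (Set G) :=
  (fun x => {g : G | ∃ j ∈ J, g = j * x}) '' X

/-- `Y` crosses `X` (both `J`-almost invariant) if all four intersections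
`X ∩ Y`, `X* ∩ Y`, `X ∩ Y*`, `X* ∩ Y*` project to infinite subsets of `J\G`. -/
def Crosses {G : Type*} [Group G] (J : Subgroup G) (Y X : Set G) : Prop :=
  (cosetProj J (X ∩ Y)).Infinite ∧ (cosetProj J (Xᶜ ∩ Y)).Infinite ∧
    (cosetProj J (X ∩ Yᶜ)).Infinite ∧ (cosetProj J (Xᶜ ∩ Yᶜ)).Infinite

section Aux
variable {G : Type} [Group G] {A B J : Subgroup G}

/-- Concatenation of alternating words, when the junction letters have opposite types. -/
lemma altword_append {b c : Bool} {w l : List G}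
    (hw : AltWord A B J b w) (hl : AltWord A B J c l)
    (h1 : Even w.length → b = c) (h2 : ¬ Even w.length → c = !b) :
    AltWord A B J b (w ++ l) := by
  induction hw generalizing c with
  | nil b =>
      obtain rfl := h1 (by simp)
      exact hl
  | consA hx hxJ hw ih =>
      refine AltWord.consA hx hxJ (ih hl ?_ ?_)
      · intro he
        have := h2 (by simpa [Nat.even_add_one] using he)
        simp at this
        exact this.symm
      · intro hne
        have := h1 (by simpa [Nat.even_add_one] using hne)
        simp [this]
  | consB hx hxJ hw ih =>
      refine AltWord.consB hx hxJ (ih hl ?_ ?_)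
      · intro he
        have := h2 (by simpa [Nat.even_add_one] using he)
        simp at this
        exact this.symm
      · intro hne
        have := h1 (by simpa [Nat.even_add_one] using hne)
        simp [this]

/-- A `J`-element can be absorbed into the last letter of a nonempty alternating word. -/
lemma altword_push (hJA : J ≤ A) (hJB : J ≤ B) {b : Bool} {w : List G}
    (hw : AltWord A B J b w) {j : G} (hj : j ∈ J) :
    w = [] ∨ ∃ w' : List G, AltWord A B J b w' ∧ w'.prod = w.prod * j ∧
      w'.length = w.length := by
  induction hw with
  | nil b => exact Or.inl rfl
  | consA hx hxJ hw ih =>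
      rename_i x l
      right
      rcases ih with rfl | ⟨w', hw', hp, hlen⟩
      · refine ⟨[x * j], AltWord.consA (mul_mem hx (hJA hj)) (fun h => hxJ ?_)
          (AltWord.nil _), by simp [mul_assoc], rfl⟩
        have : x = (x * j) * j⁻¹ := by group
        rw [this]; exact mul_mem h (inv_mem hj)
      · exact ⟨x :: w', AltWord.consA hx hxJ hw', by simp [hp, mul_assoc], by simp [hlen]⟩
  | consB hx hxJ hw ih =>
      rename_i x l
      right
      rcases ih with rfl | ⟨w', hw', hp, hlen⟩
      · refine ⟨[x * j], AltWord.consB (mul_mem hx (hJB hj)) (fun h => hxJ ?_)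
          (AltWord.nil _), by simp [mul_assoc], rfl⟩
        have : x = (x * j) * j⁻¹ := by group
        rw [this]; exact mul_mem h (inv_mem hj)
      · exact ⟨x :: w', AltWord.consB hx hxJ hw', by simp [hp, mul_assoc], by simp [hlen]⟩

/-- Uniqueness of the normal-form type: two nonempty alternating words starting with letters
of different types cannot represent the same coset of `J`. -/
lemma altword_ne (hJA : J ≤ A) (hJB : J ≤ B)
    (hred : ∀ (b : Bool) (l : List G), AltWord A B J b l → l ≠ [] → l.prod ∉ J)
    {b : Bool} {l₁ : List G} (h1 : AltWord A B J b l₁) :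
    ∀ l₂ : List G, AltWord A B J (!b) l₂ → l₁ ≠ [] → l₂ ≠ [] →
      ∀ j ∈ J, l₁.prod ≠ j * l₂.prod := by
  induction h1 with
  | nil b => intro _ _ h; exact absurd rfl h
  | consA hx hxJ hw ih =>
      rename_i x t
      intro l₂ h2 _ hl2 j hj heq
      have hx' : x⁻¹ * j ∈ A := mul_mem (inv_mem hx) (hJA hj)
      have hx'J : x⁻¹ * j ∉ J := fun h => hxJ (by
        have : x = j * (x⁻¹ * j)⁻¹ := by group
        rw [this]; exact mul_mem hj (inv_mem h))
      have hnew : AltWord A B J true ((x⁻¹ * j) :: l₂) := AltWord.consA hx' hx'J h2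
      have hkey : t.prod = ((x⁻¹ * j) :: l₂).prod := by
        simp only [List.prod_cons] at heq ⊢
        rw [mul_assoc, ← heq]; group
      rcases eq_or_ne t [] with rfl | htne
      · exact hred true _ hnew (by simp) (by
          simp only [List.prod_nil] at hkey
          rw [← hkey]; exact one_mem J)
      · exact ih _ hnew htne (by simp) 1 (one_mem J) (by simpa using hkey)
  | consB hx hxJ hw ih =>
      rename_i x t
      intro l₂ h2 _ hl2 j hj heq
      have hx' : x⁻¹ * j ∈ B := mul_mem (inv_mem hx) (hJB hj)
      have hx'J : x⁻¹ * j ∉ J := fun h => hxJ (by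
        have : x = j * (x⁻¹ * j)⁻¹ := by group
        rw [this]; exact mul_mem hj (inv_mem h))
      have hnew : AltWord A B J false ((x⁻¹ * j) :: l₂) := AltWord.consB hx' hx'J h2
      have hkey : t.prod = ((x⁻¹ * j) :: l₂).prod := by
        simp only [List.prod_cons] at heq ⊢
        rw [mul_assoc, ← heq]; group
      rcases eq_or_ne t [] with rfl | htne
      · exact hred false _ hnew (by simp) (by
          simp only [List.prod_nil] at hkey
          rw [← hkey]; exact one_mem J)
      · exact ih _ hnew htne (by simp) 1 (one_mem J) (by simpa using hkey)

/-- `X` is left `J`-invariant. -/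
lemma mem_pos_mul {j : G} (hj : j ∈ J) {x : G} (hx : x ∈ amalgamPositiveSet A B J) :
    j * x ∈ amalgamPositiveSet A B J := by
  obtain ⟨j', l, hj', hne, hl, rfl⟩ := hx
  exact ⟨j * j', l, mul_mem hj hj', hne, hl, (mul_assoc _ _ _).symm⟩

/-- An element with a normal form of negative type (possibly trivial) is not in `X`. -/
lemma notMem_pos (hJA : J ≤ A) (hJB : J ≤ B)
    (hred : ∀ (b : Bool) (l : List G), AltWord A B J b l → l ≠ [] → l.prod ∉ J)
    {j : G} {l : List G} (hj : j ∈ J) (hl : AltWord A B J false l) :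
    j * l.prod ∉ amalgamPositiveSet A B J := by
  rintro ⟨j', l', hj', hne', halt', heq⟩
  rcases eq_or_ne l [] with rfl | hl0
  · refine hred true l' halt' hne' ?_
    have : l'.prod = j'⁻¹ * j := by
      simp only [List.prod_nil, mul_one] at heq
      rw [heq]; group
    rw [this]; exact mul_mem (inv_mem hj') hj
  · refine altword_ne hJA hJB hred halt' l hl hne' hl0 (j'⁻¹ * j)
      (mul_mem (inv_mem hj') hj) ?_
    rw [mul_assoc, heq]; group

/-- Every element outside `X` has a normal form of negative type. -/
lemma compl_form
    (hgen : ∀ g : G, ∃ (j : G) (b : Bool) (l : List G),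
      j ∈ J ∧ AltWord A B J b l ∧ g = j * l.prod)
    {x : G} (hx : x ∉ amalgamPositiveSet A B J) :
    ∃ (j : G) (l : List G), j ∈ J ∧ AltWord A B J false l ∧ x = j * l.prod := by
  obtain ⟨j, b, l, hj, hl, rfl⟩ := hgen x
  rcases eq_or_ne l [] with rfl | hne
  · exact ⟨j, [], hj, AltWord.nil _, rfl⟩
  · cases b with
    | false => exact ⟨j, l, hj, hl, rfl⟩
    | true => exact absurd ⟨j, l, hj, hne, hl, rfl⟩ hx

lemma coset_proj_empty_not_infinite {S : Set G} (h : S = ∅) :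
    ¬ (cosetProj J S).Infinite := by
  rw [h]
  unfold cosetProj
  rw [Set.image_empty]
  exact Set.not_infinite.mpr Set.finite_empty

end Aux

/-- Let `G` be a finitely generated group with a finitely generated subgroup `J`, and let
`X ⊆ G` be the `J`-almost invariant set associated to a splitting `G = A ∗_J B`. Then for
every `g ∈ G`, `gX` does not cross `X`. -/
theorem amalgam_almost_invariant_not_crossing (G : Type) [Group G]
    (hGfg : Group.FG G) (A B J : Subgroup G) (hJfg : Group.FG J)
    (hJA : J < A) (hJB : J < B)
    (hgen : ∀ g : G, ∃ (j : G) (b : Bool) (l : List G),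
      j ∈ J ∧ AltWord A B J b l ∧ g = j * l.prod)
    (hred : ∀ (b : Bool) (l : List G), AltWord A B J b l → l ≠ [] → l.prod ∉ J) :
    ∀ g : G, ¬ Crosses J ((fun x => g * x) '' amalgamPositiveSet A B J)
      (amalgamPositiveSet A B J) := by
  intro g hcr
  set X := amalgamPositiveSet A B J with hXdef
  set Y := (fun x => g * x) '' X with hYdef
  have hJA' : J ≤ A := hJA.le
  have hJB' : J ≤ B := hJB.le
  obtain ⟨j₀, c, w, hj₀, hw, hg⟩ := hgen g
  rcases eq_or_ne w [] with rfl | hwne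
  · -- `g ∈ J`, so `gX = X` and `Xᶜ ∩ Y = ∅`.
    refine coset_proj_empty_not_infinite (J := J) ?_ hcr.2.1
    ext x
    simp only [Set.mem_inter_iff, Set.mem_compl_iff, Set.mem_empty_iff_false, iff_false,
      not_and]
    intro hxc hxY
    obtain ⟨x₀, hx₀, rfl⟩ := hxY
    refine hxc ?_
    show g * x₀ ∈ X
    have : g * x₀ = j₀ * x₀ := by rw [hg]; simp
    rw [this]
    exact mem_pos_mul hj₀ hx₀
  · -- `w` is a nonempty alternating word; split on its first-letter type and parity.
    rcases Nat.even_or_odd w.length with hpar | hpar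
    · cases c with
      | true =>
        -- first and last letters in `A \ J` resp. `B \ J`: `gX ⊆ X`.
        refine coset_proj_empty_not_infinite (J := J) ?_ hcr.2.1
        ext x
        simp only [Set.mem_inter_iff, Set.mem_compl_iff, Set.mem_empty_iff_false, iff_false,
          not_and]
        intro hxc hxY
        obtain ⟨x₀, hx₀, rfl⟩ := hxY
        obtain ⟨j, l, hj, hne, hl, rfl⟩ := hx₀
        rcases altword_push hJA' hJB' hw hj with h | ⟨w', hw', hp, hlen⟩
        · exact hwne h
        refine hxc ⟨j₀, w' ++ l, hj₀, ?_, ?_, ?_⟩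
        · intro h; exact hne (List.append_eq_nil_iff.mp h).2
        · exact altword_append hw' hl (fun _ => rfl)
            (fun h => absurd (hlen ▸ hpar) h)
        · rw [hg, List.prod_append, hp]; group
      | false =>
        -- first and last letters in `B \ J` resp. `A \ J`: `gXᶜ ⊆ Xᶜ`.
        refine coset_proj_empty_not_infinite (J := J) ?_ hcr.2.2.1
        ext x
        simp only [Set.mem_inter_iff, Set.mem_compl_iff, Set.mem_empty_iff_false, iff_false,
          not_and]
        intro hx1 hx2
        have hx₀ : g⁻¹ * x ∉ X := fun h => hx2 ⟨g⁻¹ * x, h, by group⟩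
        obtain ⟨j, l, hj, hl, hxeq⟩ := compl_form hgen hx₀
        rcases altword_push hJA' hJB' hw hj with h | ⟨w', hw', hp, hlen⟩
        · exact hwne h
        have hwl : AltWord A B J false (w' ++ l) :=
          altword_append hw' hl (fun _ => rfl) (fun h => absurd (hlen ▸ hpar) h)
        refine notMem_pos hJA' hJB' hred hj₀ hwl ?_
        have hx1' : g * (j * l.prod) ∈ X := by
          have h' : g * (j * l.prod) = x := by rw [← hxeq]; group
          rwa [h']
        have heq2 : j₀ * (w' ++ l).prod = g * (j * l.prod) := by
          rw [hg, List.prod_append, hp]; group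
        rw [heq2]; exact hx1'
    · cases c with
      | true =>
        -- first and last letters both in `A \ J`: `gXᶜ ⊆ X`.
        refine coset_proj_empty_not_infinite (J := J) ?_ hcr.2.2.2
        ext x
        simp only [Set.mem_inter_iff, Set.mem_compl_iff, Set.mem_empty_iff_false, iff_false,
          not_and]
        intro hx1 hx2
        have hx₀ : g⁻¹ * x ∉ X := fun h => hx2 ⟨g⁻¹ * x, h, by group⟩
        obtain ⟨j, l, hj, hl, hxeq⟩ := compl_form hgen hx₀
        rcases altword_push hJA' hJB' hw hj with h | ⟨w', hw', hp, hlen⟩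
        · exact hwne h
        have hw'ne : w' ≠ [] := by
          intro h
          apply hwne
          have := hlen
          rw [h] at this
          exact List.eq_nil_of_length_eq_zero this.symm
        refine hx1 ⟨j₀, w' ++ l, hj₀, ?_, ?_, ?_⟩
        · intro h; exact hw'ne (List.append_eq_nil_iff.mp h).1
        · exact altword_append hw' hl
            (fun h => absurd (hlen ▸ h) (Nat.not_even_iff_odd.mpr hpar)) (fun _ => rfl)
        · have : x = g * (j * l.prod) := by rw [← hxeq]; group
          rw [this, hg, List.prod_append, hp]; group
      | false =>
        -- first and last letters both in `B \ J`: `gX ⊆ Xᶜ`.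
        refine coset_proj_empty_not_infinite (J := J) ?_ hcr.1
        ext x
        simp only [Set.mem_inter_iff, Set.mem_empty_iff_false, iff_false, not_and]
        intro hx1 hxY
        obtain ⟨x₀, hx₀, rfl⟩ := hxY
        obtain ⟨j, l, hj, hne, hl, rfl⟩ := hx₀
        rcases altword_push hJA' hJB' hw hj with h | ⟨w', hw', hp, hlen⟩
        · exact hwne h
        have hwl : AltWord A B J false (w' ++ l) :=
          altword_append hw' hl
            (fun h => absurd (hlen ▸ h) (Nat.not_even_iff_odd.mpr hpar)) (fun _ => rfl)
        refine notMem_pos hJA' hJB' hred hj₀ hwl ?_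
        have heq2 : j₀ * (w' ++ l).prod = g * (j * l.prod) := by
          rw [hg, List.prod_append, hp]; group
        rw [heq2]; exact hx1
end

section
/- Let G be a group quasi-isometric to ℤⁿ (with the word metric from the standard generating set). If H ≤ G is a subgroup also quasi-isometric to ℤⁿ, then H has finite index in G. (Special case: a monomorphism between two groups quasi-isometric to ℤⁿ has image of finite index.) -/
/-!
A quasi-isometry `G → ℤⁿ` is boundedly-many-to-one, so the word ball of radius `t` in `G` has
`O(tⁿ)` elements. A coarsely surjective quasi-isometric embedding `H → ℤⁿ` has a coarse inverse
`ℤⁿ → H`, which is again boundedly-many-to-one, so the part of the ball of radius `t` lying in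
`H` has at least `c tⁿ` elements. If `s` cosets of `H` have representatives in the ball of
radius `R`, the left translates of the `H`-part of the ball of radius `ρ` by these
representatives are disjoint and lie in the ball of radius `R + ρ`, whence
`s c ρⁿ ≤ C (R + ρ)ⁿ`. Letting `ρ → ∞` bounds `s` independently of `R`, so `G ⧸ H` is finite.
-/

/-- The word distance on a group `G` associated to a generating set `Sg`. -/
noncomputable def wordDist {G : Type*} [Group G] (Sg : Set G) (x y : G) : ℝ :=
  sInf {r : ℝ | ∃ l : List G, (∀ s ∈ l, s ∈ Sg ∨ s⁻¹ ∈ Sg) ∧ l.prod = x⁻¹ * y ∧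
    r = l.length}

/-- `(X, dX)` and `(Y, dY)` are quasi-isometric (via explicit distance functions). -/
def IsQIMapBetween {X Y : Type*} (dX : X → X → ℝ) (dY : Y → Y → ℝ) : Prop :=
  ∃ (K L : ℝ) (f : X → Y), 1 ≤ K ∧ 0 ≤ L ∧
    (∀ x y : X, (1 / K) * dX x y - L ≤ dY (f x) (f y) ∧
      dY (f x) (f y) ≤ K * dX x y + L) ∧
    ∀ y : Y, ∃ x : X, dY y (f x) ≤ K

theorem Set.ncard_le_ncard_image_mul {α β : Type*} {A : Set α} (hA : A.Finite) (f : α → β)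
    {N : ℕ} (hN : ∀ x ∈ A, (A ∩ f ⁻¹' {f x}).ncard ≤ N) : A.ncard ≤ (f '' A).ncard * N := by
  classical
  rw [← hA.coe_toFinset, ← Finset.coe_image, Set.ncard_coe_finset, Set.ncard_coe_finset,
    mul_comm]
  refine Finset.card_le_mul_card_image _ N fun b hb => ?_
  obtain ⟨x, hx, rfl⟩ := Finset.mem_image.mp hb
  rw [← Set.ncard_coe_finset, Finset.coe_filter]
  simpa [Set.inter_def] using hN x (hA.mem_toFinset.mp hx)

theorem le_mul_of_one_div_mul_sub_le {K L d e : ℝ} (hK : 0 < K) (h : 1 / K * d - L ≤ e) :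
    d ≤ K * (e + L) := by
  rw [div_mul_eq_mul_div, one_mul, div_sub' hK.ne', div_le_iff₀ hK] at h
  linarith

section L1

variable {ι : Type*} [Fintype ι]

def l1Dist (a b : ι → ℤ) : ℝ := ∑ i, |(a i : ℝ) - b i|

theorem l1Dist_self (a : ι → ℤ) : l1Dist a a = 0 := by simp [l1Dist]

theorem l1Dist_nonneg (a b : ι → ℤ) : 0 ≤ l1Dist a b :=
  Finset.sum_nonneg fun _ _ => abs_nonneg _

theorem l1Dist_comm (a b : ι → ℤ) : l1Dist a b = l1Dist b a :=
  Finset.sum_congr rfl fun _ _ => abs_sub_comm _ _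

theorem l1Dist_triangle (a b c : ι → ℤ) : l1Dist a c ≤ l1Dist a b + l1Dist b c := by
  rw [l1Dist, l1Dist, l1Dist, ← Finset.sum_add_distrib]
  exact Finset.sum_le_sum fun _ _ => abs_sub_le _ _ _

theorem mem_Icc_of_l1Dist_le {c a : ι → ℤ} {k : ℕ} (h : l1Dist c a ≤ k) :
    a ∈ Set.Icc (c - k) (c + k) := by
  have hi : ∀ i, |c i - a i| ≤ (k : ℤ) := fun i => by
    have : |(c i : ℝ) - a i| ≤ k :=
      (Finset.single_le_sum (f := fun j => |(c j : ℝ) - a j|) (fun _ _ => abs_nonneg _)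
        (Finset.mem_univ i)).trans h
    exact_mod_cast this
  refine ⟨fun i => ?_, fun i => ?_⟩ <;> obtain ⟨h₁, h₂⟩ := abs_le.mp (hi i) <;>
    simp only [Pi.sub_apply, Pi.add_apply, Pi.natCast_apply] <;> omega

theorem l1Dist_le_of_mem_Icc {c a : ι → ℤ} {k : ℕ} (h : a ∈ Set.Icc (c - k) (c + k)) :
    l1Dist c a ≤ Fintype.card ι * k := by
  have hi : ∀ i, |(c i : ℝ) - a i| ≤ k := fun i => by
    have h₁ := h.1 i
    have h₂ := h.2 i
    simp only [Pi.sub_apply, Pi.add_apply, Pi.natCast_apply] at h₁ h₂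
    have : |c i - a i| ≤ (k : ℤ) := abs_le.mpr ⟨by omega, by omega⟩
    exact_mod_cast this
  simpa [l1Dist] using Finset.sum_le_sum fun i (_ : i ∈ Finset.univ) => hi i

theorem ncard_Icc_sub_add [DecidableEq ι] (c : ι → ℤ) (k : ℕ) :
    (Set.Icc (c - k) (c + k)).ncard = (2 * k + 1) ^ Fintype.card ι := by
  rw [← Finset.coe_Icc, Set.ncard_coe_finset, Pi.card_Icc]
  have hcard : ∀ i, (c i + k + 1 - (c i - k)).toNat = 2 * k + 1 := fun i => by omega
  simp only [Pi.sub_apply, Pi.add_apply, Pi.natCast_apply, Int.card_Icc, hcard,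
    Finset.prod_const, Finset.card_univ]

end L1

section WordMetric

variable {G : Type*} [Group G] {S : Set G}

variable (S) in
theorem wordDist_mul_left (g x y : G) : wordDist S (g * x) (g * y) = wordDist S x y := by
  simp only [wordDist, mul_inv_rev, mul_assoc, inv_mul_cancel_left]

variable (S) in
theorem wordDist_nonneg (x y : G) : 0 ≤ wordDist S x y :=
  Real.sInf_nonneg (by rintro _ ⟨l, -, -, rfl⟩; positivity)

theorem wordDist_le_length {x y : G} {l : List G} (hl : ∀ s ∈ l, s ∈ S ∨ s⁻¹ ∈ S)
    (hprod : l.prod = x⁻¹ * y) : wordDist S x y ≤ l.length :=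
  csInf_le ⟨0, by rintro r ⟨l', -, -, rfl⟩; positivity⟩ ⟨l, hl, hprod, rfl⟩

theorem exists_list_prod_eq_of_closure_eq_top (hS : Subgroup.closure S = ⊤) (g : G) :
    ∃ l : List G, (∀ s ∈ l, s ∈ S ∨ s⁻¹ ∈ S) ∧ l.prod = g := by
  have hg : g ∈ Submonoid.closure (S ∪ S⁻¹) := by
    rw [← Subgroup.closure_toSubmonoid, hS]
    trivial
  obtain ⟨l, hl, hprod⟩ := Submonoid.exists_list_of_mem_closure hg
  exact ⟨l, fun s hs => (hl s hs).imp_right Set.mem_inv.mp, hprod⟩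

theorem exists_wordDist_eq_length (hS : Subgroup.closure S = ⊤) (x y : G) :
    ∃ l : List G, (∀ s ∈ l, s ∈ S ∨ s⁻¹ ∈ S) ∧ l.prod = x⁻¹ * y ∧
      wordDist S x y = l.length := by
  classical
  have hword : ∃ k : ℕ, ∃ l : List G, (∀ s ∈ l, s ∈ S ∨ s⁻¹ ∈ S) ∧ l.prod = x⁻¹ * y ∧
      l.length = k := by
    obtain ⟨l, hl, hprod⟩ := exists_list_prod_eq_of_closure_eq_top hS (x⁻¹ * y)
    exact ⟨_, l, hl, hprod, rfl⟩
  obtain ⟨l, hl, hprod, hlen⟩ := Nat.find_spec hword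
  refine ⟨l, hl, hprod, (IsLeast.csInf_eq ⟨⟨l, hl, hprod, rfl⟩, ?_⟩)⟩
  rintro _ ⟨l', hl', hprod', rfl⟩
  rw [hlen]
  exact_mod_cast Nat.find_min' hword ⟨l', hl', hprod', rfl⟩

theorem wordDist_triangle (hS : Subgroup.closure S = ⊤) (x y z : G) :
    wordDist S x z ≤ wordDist S x y + wordDist S y z := by
  obtain ⟨l₁, hl₁, hprod₁, hlen₁⟩ := exists_wordDist_eq_length hS x y
  obtain ⟨l₂, hl₂, hprod₂, hlen₂⟩ := exists_wordDist_eq_length hS y z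
  calc wordDist S x z ≤ (l₁ ++ l₂).length :=
        wordDist_le_length (by simpa [or_imp, forall_and] using ⟨hl₁, hl₂⟩)
          (by rw [List.prod_append, hprod₁, hprod₂]; group)
    _ = wordDist S x y + wordDist S y z := by rw [hlen₁, hlen₂, List.length_append, Nat.cast_add]

variable (S) in
def wordBall (x : G) (r : ℝ) : Set G := {y | wordDist S x y ≤ r}

variable (S) in
theorem wordBall_eq_image_mul_wordBall_one (x : G) (r : ℝ) :
    wordBall S x r = (x * ·) '' wordBall S 1 r := by
  ext y
  refine ⟨fun hy => ⟨x⁻¹ * y, ?_, mul_inv_cancel_left x y⟩, ?_⟩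
  · simpa [wordBall, ← wordDist_mul_left S x⁻¹ x y] using hy
  · rintro ⟨z, hz, rfl⟩
    simpa [wordBall, ← wordDist_mul_left S x 1 z] using hz

variable (S) in
theorem ncard_wordBall (x : G) (r : ℝ) :
    (wordBall S x r).ncard = (wordBall S 1 r).ncard := by
  rw [wordBall_eq_image_mul_wordBall_one, Set.ncard_image_of_injective _ (mul_right_injective x)]

theorem finite_wordBall (hSfin : S.Finite) (hS : Subgroup.closure S = ⊤) (x : G) (r : ℝ) :
    (wordBall S x r).Finite := by
  have : Finite ↥(S ∪ S⁻¹) := (hSfin.union hSfin.inv).to_subtype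
  refine ((List.finite_length_le ↥(S ∪ S⁻¹) ⌊r⌋₊).image
    fun l => x * (l.map (↑)).prod).subset fun y hy => ?_
  obtain ⟨l, hl, hprod, hlen⟩ := exists_wordDist_eq_length hS x y
  lift l to List ↥(S ∪ S⁻¹) using fun s hs => (hl s hs).imp_right Set.mem_inv.mpr
  refine ⟨l, Nat.le_floor ?_, by simp only [hprod, mul_inv_cancel_left]⟩
  rw [← List.length_map (f := Subtype.val), ← hlen]
  exact hy

end WordMetric

section Growth

variable {G : Type*} [Group G] {S : Set G} {ι : Type*} [Fintype ι]

theorem exists_ncard_wordBall_le_pow (hSfin : S.Finite) (hS : Subgroup.closure S = ⊤)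
    (hG : IsQIMapBetween (wordDist S) (l1Dist (ι := ι))) :
    ∃ C D E : ℝ, 0 ≤ C ∧ 0 ≤ D ∧ 0 ≤ E ∧
      ∀ t, 0 ≤ t → ((wordBall S 1 t).ncard : ℝ) ≤ C * (D * t + E) ^ Fintype.card ι := by
  classical
  obtain ⟨K, L, f, hK, hL, hf, -⟩ := hG
  have hK₀ : 0 < K := one_pos.trans_le hK
  refine ⟨(wordBall S 1 (K * L)).ncard, 2 * K, 2 * L + 3, by positivity, by positivity,
    by positivity, fun t ht => ?_⟩
  set k := ⌈K * t + L⌉₊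
  have hfibre : ∀ x ∈ wordBall S 1 t, (wordBall S 1 t ∩ f ⁻¹' {f x}).ncard ≤
      (wordBall S 1 (K * L)).ncard := fun x _ => by
    rw [← ncard_wordBall S x]
    refine Set.ncard_le_ncard (fun y ⟨_, hy⟩ => ?_) (finite_wordBall hSfin hS x _)
    have := le_mul_of_one_div_mul_sub_le hK₀ (hf x y).1
    rwa [hy, l1Dist_self, zero_add] at this
  have himage : f '' wordBall S 1 t ⊆ Set.Icc (f 1 - k) (f 1 + k) := by
    rintro _ ⟨x, hx, rfl⟩
    refine mem_Icc_of_l1Dist_le ((hf 1 x).2.trans ((Nat.le_ceil _).trans' ?_))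
    gcongr
    exact hx
  have hcount : (wordBall S 1 t).ncard ≤ (2 * k + 1) ^ Fintype.card ι *
      (wordBall S 1 (K * L)).ncard := by
    calc (wordBall S 1 t).ncard
        ≤ (f '' wordBall S 1 t).ncard * (wordBall S 1 (K * L)).ncard :=
          Set.ncard_le_ncard_image_mul (finite_wordBall hSfin hS 1 t) f hfibre
      _ ≤ (2 * k + 1) ^ Fintype.card ι * (wordBall S 1 (K * L)).ncard := by
          gcongr
          exact (Set.ncard_le_ncard himage (Set.finite_Icc _ _)).trans_eq (ncard_Icc_sub_add _ _)
  have hk : (2 * k + 1 : ℝ) ≤ 2 * K * t + (2 * L + 3) := by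
    have := Nat.ceil_lt_add_one (show 0 ≤ K * t + L by positivity)
    linarith
  calc ((wordBall S 1 t).ncard : ℝ)
      ≤ (2 * k + 1 : ℝ) ^ Fintype.card ι * (wordBall S 1 (K * L)).ncard := by exact_mod_cast hcount
    _ ≤ _ := by rw [mul_comm]; gcongr

theorem exists_pow_le_ncard_wordBall_inter (hSfin : S.Finite) (hS : Subgroup.closure S = ⊤)
    (H : Subgroup G) (hH : IsQIMapBetween (fun x y : H => wordDist S x y) (l1Dist (ι := ι))) :
    ∃ M a b : ℝ, 0 ≤ M ∧ 0 ≤ a ∧ 0 ≤ b ∧ ∀ m : ℕ,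
      (2 * m + 1 : ℝ) ^ Fintype.card ι ≤ M * (wordBall S 1 (a + b * m) ∩ H).ncard := by
  classical
  obtain ⟨K, L, φ, hK, hL, hφ, hsurj⟩ := hH
  have hK₀ : 0 < K := one_pos.trans_le hK
  choose ψ hψ using hsurj
  set k := ⌈2 * K⌉₊
  set E := l1Dist (φ 1) 0
  refine ⟨(2 * k + 1) ^ Fintype.card ι, K * (E + K + L), K * Fintype.card ι, by positivity,
    by have := l1Dist_nonneg (φ 1) 0; positivity, by positivity, fun m => ?_⟩
  set box : Set (ι → ℤ) := Set.Icc (0 - m) (0 + m)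
  have hfibre : ∀ a ∈ box, (box ∩ (fun a => (ψ a : G)) ⁻¹' {(ψ a : G)}).ncard ≤
      (2 * k + 1) ^ Fintype.card ι := fun a _ => by
    rw [← ncard_Icc_sub_add a k]
    refine Set.ncard_le_ncard (fun a' ⟨_, ha'⟩ => mem_Icc_of_l1Dist_le ?_) (Set.finite_Icc _ _)
    have hψa' : ψ a' = ψ a := Subtype.coe_injective ha'
    calc l1Dist a a' ≤ l1Dist a (φ (ψ a)) + l1Dist (φ (ψ a')) a' := by
          rw [hψa']; exact l1Dist_triangle _ _ _
      _ ≤ 2 * K := by linarith [hψ a, l1Dist_comm a' (φ (ψ a')), hψ a']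
      _ ≤ k := Nat.le_ceil _
  have himage : (fun a => (ψ a : G)) '' box ⊆
      wordBall S 1 (K * (E + K + L) + K * Fintype.card ι * m) ∩ H := by
    rintro _ ⟨a, ha, rfl⟩
    refine ⟨?_, (ψ a).2⟩
    have hlow : wordDist S 1 (ψ a) ≤ K * (l1Dist (φ 1) (φ (ψ a)) + L) :=
      le_mul_of_one_div_mul_sub_le hK₀ (hφ 1 (ψ a)).1
    have ha₀ : l1Dist 0 a ≤ Fintype.card ι * m := l1Dist_le_of_mem_Icc ha
    have hφa : l1Dist (φ 1) (φ (ψ a)) ≤ E + Fintype.card ι * m + K :=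
      by linarith [l1Dist_triangle (φ 1) 0 (φ (ψ a)), l1Dist_triangle 0 a (φ (ψ a)), hψ a]
    refine hlow.trans ?_
    nlinarith
  have hcount : (2 * m + 1) ^ Fintype.card ι ≤ (2 * k + 1) ^ Fintype.card ι *
      (wordBall S 1 (K * (E + K + L) + K * Fintype.card ι * m) ∩ H).ncard :=
    calc (2 * m + 1) ^ Fintype.card ι = box.ncard := (ncard_Icc_sub_add 0 m).symm
      _ ≤ ((fun a => (ψ a : G)) '' box).ncard * (2 * k + 1) ^ Fintype.card ι :=
          Set.ncard_le_ncard_image_mul (Set.finite_Icc _ _) _ hfibre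
      _ ≤ _ := by
          rw [mul_comm]
          exact Nat.mul_le_mul_left _
            (Set.ncard_le_ncard himage ((finite_wordBall hSfin hS 1 _).inter_of_left _))
  exact_mod_cast hcount

end Growth

section Index

variable {G : Type*} [Group G] {S : Set G}

theorem card_mul_ncard_wordBall_inter_le (hSfin : S.Finite) (hS : Subgroup.closure S = ⊤)
    (H : Subgroup G) (s : Finset (G ⧸ H)) {R : ℝ} (hR : ∀ q ∈ s, wordDist S 1 q.out ≤ R)
    (ρ : ℝ) : s.card * (wordBall S 1 ρ ∩ H).ncard ≤ (wordBall S 1 (R + ρ)).ncard := by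
  rw [← Set.ncard_coe_finset s, ← Set.ncard_prod]
  refine Set.ncard_le_ncard_of_injOn (fun p => p.1.out * p.2) ?_ ?_ (finite_wordBall hSfin hS 1 _)
  · rintro ⟨q, h⟩ ⟨hq, hh, -⟩
    calc wordDist S 1 (q.out * h) ≤ wordDist S 1 q.out + wordDist S q.out (q.out * h) :=
          wordDist_triangle hS _ _ _
      _ ≤ R + ρ := by
          rw [← mul_one q.out, mul_assoc, one_mul, wordDist_mul_left, mul_one]
          exact add_le_add (hR q hq) hh
  · rintro ⟨q, h⟩ ⟨-, -, hhH⟩ ⟨q', h'⟩ ⟨-, -, hh'H⟩ heq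
    have hq : q = q' := by
      have hmk : ((q.out * h : G) : G ⧸ H) = ((q'.out * h' : G) : G ⧸ H) := congrArg _ heq
      rwa [QuotientGroup.mk_mul_of_mem _ hhH, QuotientGroup.mk_mul_of_mem _ hh'H,
        QuotientGroup.out_eq', QuotientGroup.out_eq'] at hmk
    subst hq
    exact Prod.ext rfl (mul_left_cancel heq)

theorem card_le_of_growth (hSfin : S.Finite) (hS : Subgroup.closure S = ⊤) {H : Subgroup G}
    {d : ℕ} {C D E M a b : ℝ} (hC : 0 ≤ C) (hD : 0 ≤ D) (hE : 0 ≤ E) (hM : 0 ≤ M) (ha : 0 ≤ a)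
    (hb : 0 ≤ b) (hup : ∀ t, 0 ≤ t → ((wordBall S 1 t).ncard : ℝ) ≤ C * (D * t + E) ^ d)
    (hlow : ∀ m : ℕ, (2 * m + 1 : ℝ) ^ d ≤ M * (wordBall S 1 (a + b * m) ∩ H).ncard)
    (s : Finset (G ⧸ H)) : (s.card : ℝ) ≤ M * C * (D * b + 1) ^ d := by
  set R := ∑ q ∈ s, wordDist S 1 q.out
  have hR : ∀ q ∈ s, wordDist S 1 q.out ≤ R := fun q hq =>
    Finset.single_le_sum (fun q _ => wordDist_nonneg S 1 q.out) hq
  have hR₀ : 0 ≤ R := Finset.sum_nonneg fun q _ => wordDist_nonneg S 1 q.out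
  -- `m` absorbs the dependence on `R`, which makes the bound uniform in `s`.
  set m := ⌈D * (R + a) + E⌉₊
  have hm : D * (R + (a + b * m)) + E ≤ (D * b + 1) * (2 * m + 1) := by
    have := Nat.le_ceil (D * (R + a) + E)
    nlinarith [mul_nonneg hD hb, (Nat.cast_nonneg m : (0 : ℝ) ≤ m)]
  refine le_of_mul_le_mul_right ?_ (by positivity : (0 : ℝ) < (2 * m + 1) ^ d)
  calc (s.card : ℝ) * (2 * m + 1) ^ d
      ≤ s.card * (M * (wordBall S 1 (a + b * m) ∩ H).ncard) := by gcongr; exact hlow m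
    _ = M * ((s.card * (wordBall S 1 (a + b * m) ∩ H).ncard : ℕ) : ℝ) := by
        rw [Nat.cast_mul, mul_left_comm]
    _ ≤ M * (wordBall S 1 (R + (a + b * m))).ncard := by
        gcongr
        exact card_mul_ncard_wordBall_inter_le hSfin hS H s hR _
    _ ≤ M * (C * (D * (R + (a + b * m)) + E) ^ d) := by gcongr; exact hup _ (by positivity)
    _ ≤ M * (C * ((D * b + 1) * (2 * m + 1)) ^ d) := by gcongr
    _ = M * C * (D * b + 1) ^ d * (2 * m + 1) ^ d := by rw [mul_pow]; ring

theorem Subgroup.index_ne_zero_of_growth (hSfin : S.Finite) (hS : Subgroup.closure S = ⊤)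
    (H : Subgroup G) {d : ℕ}
    (hG : ∃ C D E : ℝ, 0 ≤ C ∧ 0 ≤ D ∧ 0 ≤ E ∧
      ∀ t, 0 ≤ t → ((wordBall S 1 t).ncard : ℝ) ≤ C * (D * t + E) ^ d)
    (hH : ∃ M a b : ℝ, 0 ≤ M ∧ 0 ≤ a ∧ 0 ≤ b ∧ ∀ m : ℕ,
      (2 * m + 1 : ℝ) ^ d ≤ M * (wordBall S 1 (a + b * m) ∩ H).ncard) :
    H.index ≠ 0 := by
  obtain ⟨C, D, E, hC, hD, hE, hup⟩ := hG
  obtain ⟨M, a, b, hM, ha, hb, hlow⟩ := hH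
  set N := M * C * (D * b + 1) ^ d
  rw [Subgroup.index_ne_zero_iff_finite, ← not_infinite_iff_finite]
  intro _
  obtain ⟨s, hs⟩ := Infinite.exists_subset_card_eq (G ⧸ H) (⌊N⌋₊ + 1)
  have hcard := card_le_of_growth hSfin hS hC hD hE hM ha hb hup hlow s
  rw [hs, Nat.cast_add, Nat.cast_one] at hcard
  linarith [Nat.lt_floor_add_one N]

end Index

/-- Let `G` be a finitely generated group quasi-isometric to `ℤⁿ`. If `H ≤ G` (with the
subspace metric coming from an orbit in the Cayley graph of `G`) is also quasi-isometric
to `ℤⁿ`, then `H` has finite index in `G`. -/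
theorem subgroup_qi_to_Zn_finite_index (n : ℕ) (G : Type) [Group G]
    (Sg : Set G) (hSgfin : Sg.Finite) (hSggen : Subgroup.closure Sg = ⊤)
    (H : Subgroup G)
    (hG : IsQIMapBetween (wordDist Sg)
      (fun a b : Fin n → ℤ => ∑ i : Fin n, |((a i : ℝ)) - ((b i : ℝ))|))
    (hH : IsQIMapBetween (fun a b : H => wordDist Sg (a : G) (b : G))
      (fun a b : Fin n → ℤ => ∑ i : Fin n, |((a i : ℝ)) - ((b i : ℝ))|)) :
    H.index ≠ 0 :=
  H.index_ne_zero_of_growth hSgfin hSggen (exists_ncard_wordBall_le_pow hSgfin hSggen hG)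
    (exists_pow_le_ncard_wordBall_inter hSgfin hSggen H hH)
end
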